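/- Let F : (0,∞) × ℝ → [0,∞) be integrable with ∫∫_{(0,∞)×ℝ} F(r,t) dr dt < ∞, let t₀ ∈ ℝ, and for r₀ > 0 let G(r₀) := ∫∫_{Ω(r₀)} F(r,t) dr dt where Ω(r₀) = {(r,t) : r > 0, t > t₀, t₀ + r₀ < t + r < t₀ + 2r₀}. Then for each r₀ > 0 there exists r ∈ [r₀, 2r₀] such that ∫_{t₀}^{t₀+r} (t₀ + r − t) F(t₀+r−t, t) dt ≤ 2 G(r₀); consequently liminf_{r→∞} ∫_{t₀}^{t₀+r} (t₀+r−t) F(t₀+r−t,t) dt = 0, and in particular, whenever ∫∫ |w|^{p+1}/r^p dr dt < ∞, the characteristic-line flux satisfies liminf_{r→∞} ∫_{t₀}^{t₀+r} |w(t₀+r−t,t)|^{p+1}/(t₀+r−t)^{p-1} dt = 0 (taking F = |w|^{p+1}/r^p, so that the flux integrand is |w|^{p+1}/r^{p-1} = r · (|w|^{p+1}/r^p)). -/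

import Mathlib

open MeasureTheory Set Filter ENNReal Topology

namespace Stmt11Aux

noncomputable section

variable (t₀ : ℝ) (F : ℝ → ℝ → ℝ)

/-- The region Ω(r₀). -/
def Om (r₀ : ℝ) : Set (ℝ × ℝ) :=
  {q : ℝ × ℝ | 0 < q.1 ∧ t₀ < q.2 ∧ t₀ + r₀ < q.1 + q.2 ∧ q.1 + q.2 < t₀ + 2 * r₀}

/-- The flux as an `ℝ≥0∞`-valued integral. -/
def Qe (r : ℝ) : ℝ≥0∞ :=
  ∫⁻ t in Ioc t₀ (t₀ + r), ENNReal.ofReal ((t₀ + r - t) * F (t₀ + r - t) t)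

/-- The mass of `F` over Ω(r₀), as an `ℝ≥0∞`-valued integral. -/
def Ge (r₀ : ℝ) : ℝ≥0∞ := ∫⁻ q in Om t₀ r₀, ENNReal.ofReal (F q.1 q.2)

variable {t₀ F}

lemma measurableSet_Om (r₀ : ℝ) : MeasurableSet (Om t₀ r₀) := by
  have h1 : Measurable fun q : ℝ × ℝ => q.1 := measurable_fst
  have h2 : Measurable fun q : ℝ × ℝ => q.2 := measurable_snd
  exact (measurableSet_lt measurable_const h1).inter
    ((measurableSet_lt measurable_const h2).inter
      ((measurableSet_lt measurable_const (h1.add h2)).inter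
        (measurableSet_lt (h1.add h2) measurable_const)))

lemma gF_meas (hFmeas : Measurable (fun q : ℝ × ℝ => F q.1 q.2)) :
    Measurable fun q : ℝ × ℝ => ENNReal.ofReal (F q.1 q.2) :=
  hFmeas.ennreal_ofReal

lemma Ge_ne_top (hFpos : ∀ r t, 0 ≤ F r t)
    (hFint : IntegrableOn (fun q : ℝ × ℝ => F q.1 q.2) (Ioi 0 ×ˢ univ)) (r₀ : ℝ) :
    Ge t₀ F r₀ ≠ ∞ := by
  have htot : (∫⁻ q in Ioi (0:ℝ) ×ˢ (univ : Set ℝ), ENNReal.ofReal (F q.1 q.2)) < ∞ := by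
    have h := hFint.hasFiniteIntegral
    rw [hasFiniteIntegral_iff_ofReal (f := fun q : ℝ × ℝ => F q.1 q.2)
      (μ := volume.restrict (Ioi (0:ℝ) ×ˢ (univ : Set ℝ)))
      (Eventually.of_forall fun q => hFpos q.1 q.2)] at h
    exact h
  have hsub : Om t₀ r₀ ⊆ Ioi (0:ℝ) ×ˢ (univ : Set ℝ) := fun q hq => ⟨hq.1, trivial⟩
  exact ne_top_of_le_ne_top htot.ne (lintegral_mono_set hsub)

/-- Measurability of `Qe`. -/
lemma Qe_meas (hFmeas : Measurable (fun q : ℝ × ℝ => F q.1 q.2)) :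
    Measurable (Qe t₀ F) := by
  have hψ : Measurable fun p : ℝ × ℝ =>
      ENNReal.ofReal ((t₀ + p.1 - p.2) * F (t₀ + p.1 - p.2) p.2) := by
    have hm : Measurable fun p : ℝ × ℝ => (t₀ + p.1 - p.2, p.2) :=
      ((measurable_const.add measurable_fst).sub measurable_snd).prodMk measurable_snd
    exact (((measurable_const.add measurable_fst).sub measurable_snd).mul
      (hFmeas.comp hm)).ennreal_ofReal
  have hS : MeasurableSet {p : ℝ × ℝ | t₀ < p.2 ∧ p.2 ≤ t₀ + p.1} :=
    (measurableSet_lt measurable_const measurable_snd).inter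
      (measurableSet_le measurable_snd (measurable_const.add measurable_fst))
  have key : Qe t₀ F = fun r => ∫⁻ t,
      ({p : ℝ × ℝ | t₀ < p.2 ∧ p.2 ≤ t₀ + p.1}.indicator
        (fun p => ENNReal.ofReal ((t₀ + p.1 - p.2) * F (t₀ + p.1 - p.2) p.2))) (r, t) := by
    funext r
    rw [Qe, ← lintegral_indicator measurableSet_Ioc]
    refine lintegral_congr fun t => ?_
    by_cases ht : t ∈ Ioc t₀ (t₀ + r)
    · rw [indicator_of_mem ht, indicator_of_mem (by exact ⟨ht.1, ht.2⟩)]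
    · rw [indicator_of_notMem ht, indicator_of_notMem (by
        intro h; exact ht ⟨h.1, h.2⟩)]
  rw [key]
  exact Measurable.lintegral_prod_right
    (f := fun r t => ({p : ℝ × ℝ | t₀ < p.2 ∧ p.2 ≤ t₀ + p.1}.indicator
        (fun p => ENNReal.ofReal ((t₀ + p.1 - p.2) * F (t₀ + p.1 - p.2) p.2))) (r, t))
    (hψ.indicator hS)

/-- Step A: the averaged flux is bounded by `2r₀` times the mass over Ω(r₀). -/
lemma stepA (hFmeas : Measurable (fun q : ℝ × ℝ => F q.1 q.2))
    {r₀ : ℝ} (hr₀ : 0 < r₀) :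
    (∫⁻ r in Ioc r₀ (2 * r₀), Qe t₀ F r) ≤ ENNReal.ofReal (2 * r₀) * Ge t₀ F r₀ := by
  classical
  set S : Set (ℝ × ℝ) :=
    {p : ℝ × ℝ | r₀ < p.1 ∧ p.1 ≤ 2 * r₀ ∧ t₀ < p.2 ∧ p.2 ≤ t₀ + p.1} with hSdef
  set φ : ℝ × ℝ → ℝ≥0∞ := fun p =>
    ENNReal.ofReal (t₀ + p.1 - p.2) * ENNReal.ofReal (F (t₀ + p.1 - p.2) p.2) with hφdef
  set f : ℝ → ℝ → ℝ≥0∞ := fun r t => S.indicator φ (r, t) with hfdef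
  have hφm : Measurable φ := by
    have hm : Measurable fun p : ℝ × ℝ => (t₀ + p.1 - p.2, p.2) :=
      ((measurable_const.add measurable_fst).sub measurable_snd).prodMk measurable_snd
    exact (((measurable_const.add measurable_fst).sub measurable_snd).ennreal_ofReal).mul
      ((hFmeas.comp hm).ennreal_ofReal)
  have hSm : MeasurableSet S :=
    (measurableSet_lt measurable_const measurable_fst).inter
      ((measurableSet_le measurable_fst measurable_const).inter
        ((measurableSet_lt measurable_const measurable_snd).inter
          (measurableSet_le measurable_snd (measurable_const.add measurable_fst))))
  have hfm : Measurable (Function.uncurry f) := by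
    have : Function.uncurry f = S.indicator φ := rfl
    rw [this]; exact hφm.indicator hSm
  have hgFm : Measurable fun q : ℝ × ℝ => ENNReal.ofReal (F q.1 q.2) := gF_meas hFmeas
  -- Step 1 : rewrite the LHS as an iterated integral of f
  have step1 : (∫⁻ r in Ioc r₀ (2 * r₀), Qe t₀ F r) = ∫⁻ r, ∫⁻ t, f r t := by
    rw [← lintegral_indicator measurableSet_Ioc]
    refine lintegral_congr fun r => ?_
    by_cases hr : r ∈ Ioc r₀ (2 * r₀)
    · rw [indicator_of_mem hr, Qe, ← lintegral_indicator measurableSet_Ioc]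
      refine lintegral_congr fun t => ?_
      by_cases ht : t ∈ Ioc t₀ (t₀ + r)
      · rw [indicator_of_mem ht]
        have hmem : (r, t) ∈ S := ⟨hr.1, hr.2, ht.1, ht.2⟩
        show ENNReal.ofReal ((t₀ + r - t) * F (t₀ + r - t) t) = S.indicator φ (r, t)
        rw [indicator_of_mem hmem]
        exact ENNReal.ofReal_mul (by linarith [ht.2])
      · rw [indicator_of_notMem ht]
        show (0 : ℝ≥0∞) = S.indicator φ (r, t)
        rw [indicator_of_notMem (fun h => ht ⟨h.2.2.1, h.2.2.2⟩)]
    · rw [indicator_of_notMem hr]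
      symm
      have hz : ∀ t, f r t = 0 := fun t =>
        indicator_of_notMem (fun h => hr ⟨h.1, h.2.1⟩) _
      simp [hz]
  rw [step1, lintegral_lintegral_swap hfm.aemeasurable]
  -- rewrite the RHS
  have hGe : Ge t₀ F r₀ =
      ∫⁻ t, ∫⁻ u, (Om t₀ r₀).indicator (fun q => ENNReal.ofReal (F q.1 q.2)) (u, t) := by
    rw [Ge, ← lintegral_indicator (measurableSet_Om r₀), Measure.volume_eq_prod,
      lintegral_prod_symm _ ((hgFm.indicator (measurableSet_Om r₀)).aemeasurable)]
  rw [hGe, ← lintegral_const_mul' _ _ ENNReal.ofReal_ne_top]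
  refine lintegral_mono fun t => ?_
  -- per fixed t : substitution r = u + (t - t₀)
  calc (∫⁻ r, f r t)
      = ∫⁻ u, f (u + (t - t₀)) t :=
        (lintegral_add_right_eq_self (fun r => f r t) (t - t₀)).symm
    _ ≤ ∫⁻ u, ENNReal.ofReal (2 * r₀) *
          (Om t₀ r₀).indicator (fun q => ENNReal.ofReal (F q.1 q.2)) (u, t) := by
        refine lintegral_mono_ae ?_
        filter_upwards [compl_mem_ae_iff.mpr (Real.volume_singleton
          (a := t₀ + 2 * r₀ - t))] with u hu
        have hune : u ≠ t₀ + 2 * r₀ - t := by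
          simpa [Set.mem_compl_iff, Set.mem_singleton_iff] using hu
        show S.indicator φ ((u + (t - t₀)), t) ≤ _
        by_cases hS' : ((u + (t - t₀)), t) ∈ S
        · rw [indicator_of_mem hS']
          obtain ⟨h1, h2, h3, h4⟩ := hS'
          simp only [Set.mem_setOf_eq] at h1 h2 h3 h4
          have harg : t₀ + (u + (t - t₀)) - t = u := by ring
          show ENNReal.ofReal (t₀ + (u + (t - t₀)) - t) *
            ENNReal.ofReal (F (t₀ + (u + (t - t₀)) - t) t) ≤ _
          rw [harg]
          rcases eq_or_lt_of_le (by linarith : (0:ℝ) ≤ u) with h0 | h0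
          · rw [← h0]
            simp
          · have hlt : u + t < t₀ + 2 * r₀ := by
              rcases lt_or_eq_of_le (by linarith : u + t ≤ t₀ + 2 * r₀) with h | h
              · exact h
              · exact absurd (by linarith : u = t₀ + 2 * r₀ - t) hune
            have hmem : (u, t) ∈ Om t₀ r₀ :=
              ⟨h0, h3, by show t₀ + r₀ < u + t; linarith, by show u + t < t₀ + 2 * r₀; linarith⟩
            rw [indicator_of_mem hmem]
            exact mul_le_mul_left (ENNReal.ofReal_le_ofReal (by linarith)) _
        · rw [indicator_of_notMem hS']
          exact zero_le
    _ = ENNReal.ofReal (2 * r₀) *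
          ∫⁻ u, (Om t₀ r₀).indicator (fun q => ENNReal.ofReal (F q.1 q.2)) (u, t) :=
        lintegral_const_mul' _ _ ENNReal.ofReal_ne_top

/-- The mean value step, in `ℝ≥0∞`. -/
lemma exists_r (hFmeas : Measurable (fun q : ℝ × ℝ => F q.1 q.2))
    (hFpos : ∀ r t, 0 ≤ F r t)
    (hFint : IntegrableOn (fun q : ℝ × ℝ => F q.1 q.2) (Ioi 0 ×ˢ univ))
    {r₀ : ℝ} (hr₀ : 0 < r₀) :
    ∃ r ∈ Icc r₀ (2 * r₀), Qe t₀ F r ≤ 2 * Ge t₀ F r₀ := by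
  by_contra hcon
  push_neg at hcon
  set c : ℝ≥0∞ := 2 * Ge t₀ F r₀ with hc
  have hGfin : Ge t₀ F r₀ ≠ ∞ := Ge_ne_top hFpos hFint r₀
  have hcfin : c ≠ ∞ := ENNReal.mul_ne_top (by norm_num) hGfin
  have hvol : volume (Ioc r₀ (2 * r₀)) = ENNReal.ofReal r₀ := by
    rw [Real.volume_Ioc]; congr 1; ring
  have hQm : Measurable (Qe t₀ F) := Qe_meas hFmeas
  have hlt : ∀ r ∈ Ioc r₀ (2 * r₀), c < Qe t₀ F r := fun r hr =>
    hcon r ⟨hr.1.le, hr.2⟩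
  have hconst : (∫⁻ _ in Ioc r₀ (2 * r₀), c) = c * ENNReal.ofReal r₀ := by
    rw [setLIntegral_const, hvol]
  have hge : c * ENNReal.ofReal r₀ ≤ ∫⁻ r in Ioc r₀ (2 * r₀), Qe t₀ F r := by
    rw [← hconst]
    refine lintegral_mono_ae ((ae_restrict_iff' measurableSet_Ioc).mpr
      (Eventually.of_forall fun r hr => (hlt r hr).le))
  have hle : (∫⁻ r in Ioc r₀ (2 * r₀), Qe t₀ F r) ≤ c * ENNReal.ofReal r₀ := by
    refine (stepA hFmeas hr₀).trans_eq ?_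
    rw [ENNReal.ofReal_mul (by norm_num : (0:ℝ) ≤ 2), ENNReal.ofReal_ofNat, hc]
    ring
  have heq : (∫⁻ r in Ioc r₀ (2 * r₀), Qe t₀ F r) = c * ENNReal.ofReal r₀ :=
    le_antisymm hle hge
  have hsub0 : (∫⁻ r in Ioc r₀ (2 * r₀), (Qe t₀ F r - c)) = 0 := by
    rw [lintegral_sub measurable_const
      (by rw [hconst]; exact ENNReal.mul_ne_top hcfin ENNReal.ofReal_ne_top)
      ((ae_restrict_iff' measurableSet_Ioc).mpr
        (Eventually.of_forall fun r hr => (hlt r hr).le)),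
      heq, hconst, tsub_self]
  have hae : ∀ᵐ r ∂(volume.restrict (Ioc r₀ (2 * r₀))), Qe t₀ F r - c = 0 := by
    have := (lintegral_eq_zero_iff (hQm.sub measurable_const)).mp hsub0
    filter_upwards [this] with r hr using hr
  have hne : (volume.restrict (Ioc r₀ (2 * r₀))) ≠ 0 := by
    rw [Ne, Measure.restrict_eq_zero, hvol]
    simp [ENNReal.ofReal_eq_zero, not_le, hr₀]
  have : (ae (volume.restrict (Ioc r₀ (2 * r₀)))).NeBot := ae_neBot.mpr hne
  obtain ⟨r, hr1, hr2⟩ := (hae.and (ae_restrict_mem measurableSet_Ioc)).exists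
  exact absurd (hlt r hr2) (not_lt.mpr (tsub_eq_zero_iff_le.mp hr1))

/-- `Ge` becomes small for large `r₀`. -/
lemma Ge_small (hFmeas : Measurable (fun q : ℝ × ℝ => F q.1 q.2))
    (hFpos : ∀ r t, 0 ≤ F r t)
    (hFint : IntegrableOn (fun q : ℝ × ℝ => F q.1 q.2) (Ioi 0 ×ˢ univ)) :
    ∀ ε : ℝ, 0 < ε → ∃ N : ℝ, ∀ r₀ : ℝ, N ≤ r₀ → Ge t₀ F r₀ ≤ ENNReal.ofReal ε := by
  intro ε hε
  set B : ℕ → Set (ℝ × ℝ) := fun n => {q : ℝ × ℝ | 0 < q.1 ∧ t₀ + n < q.1 + q.2} with hB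
  have hBmeas : ∀ n, MeasurableSet (B n) := fun n =>
    (measurableSet_lt measurable_const measurable_fst).inter
      (measurableSet_lt measurable_const (measurable_fst.add measurable_snd))
  set μg : Measure (ℝ × ℝ) :=
    volume.withDensity (fun q => ENNReal.ofReal (F q.1 q.2)) with hμg
  have hμgB : ∀ n, μg (B n) = ∫⁻ q in B n, ENNReal.ofReal (F q.1 q.2) := fun n =>
    withDensity_apply _ (hBmeas n)
  have htot : (∫⁻ q in Ioi (0:ℝ) ×ˢ (univ : Set ℝ), ENNReal.ofReal (F q.1 q.2)) < ∞ := by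
    have h := hFint.hasFiniteIntegral
    rw [hasFiniteIntegral_iff_ofReal (f := fun q : ℝ × ℝ => F q.1 q.2)
      (μ := volume.restrict (Ioi (0:ℝ) ×ˢ (univ : Set ℝ)))
      (Eventually.of_forall fun q => hFpos q.1 q.2)] at h
    exact h
  have hanti : Antitone B := by
    intro n m hnm q hq
    refine ⟨hq.1, lt_of_le_of_lt ?_ hq.2⟩
    have : (n : ℝ) ≤ m := Nat.cast_le.mpr hnm
    linarith
  have hint : (⋂ n, B n) = ∅ := by
    ext q
    simp only [Set.mem_iInter, Set.mem_empty_iff_false, iff_false, not_forall]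
    obtain ⟨n, hn⟩ := exists_nat_gt (q.1 + q.2 - t₀)
    exact ⟨n, fun h => absurd h.2 (by push_neg; linarith)⟩
  have hfin : μg (B 0) ≠ ∞ := by
    rw [hμgB]
    refine ne_top_of_le_ne_top htot.ne (lintegral_mono_set fun q hq => ⟨hq.1, trivial⟩)
  have htend : Tendsto (μg ∘ B) atTop (𝓝 0) := by
    have := tendsto_measure_iInter_atTop (μ := μg)
      (fun n => (hBmeas n).nullMeasurableSet) hanti ⟨0, hfin⟩
    rwa [hint, measure_empty] at this
  have hev : ∀ᶠ n in atTop, (μg ∘ B) n < ENNReal.ofReal ε :=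
    htend.eventually_lt_const (ENNReal.ofReal_pos.mpr hε)
  obtain ⟨n, hn⟩ := hev.exists
  refine ⟨n, fun r₀ hr₀ => ?_⟩
  have hsub : Om t₀ r₀ ⊆ B n := by
    intro q hq
    exact ⟨hq.1, lt_of_le_of_lt (by linarith [hq.2.2.1]) hq.2.2.1⟩
  calc Ge t₀ F r₀ ≤ ∫⁻ q in B n, ENNReal.ofReal (F q.1 q.2) := lintegral_mono_set hsub
    _ = μg (B n) := (hμgB n).symm
    _ ≤ ENNReal.ofReal ε := hn.le

/-- The real flux equals the `toReal` of `Qe`. -/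
lemma Qreal_eq (hFmeas : Measurable (fun q : ℝ × ℝ => F q.1 q.2))
    (hFpos : ∀ r t, 0 ≤ F r t) (r : ℝ) :
    (∫ t in Ioc t₀ (t₀ + r), (t₀ + r - t) * F (t₀ + r - t) t) = (Qe t₀ F r).toReal := by
  rw [integral_eq_lintegral_of_nonneg_ae]
  · rfl
  · exact (ae_restrict_iff' measurableSet_Ioc).mpr (Eventually.of_forall fun t ht =>
      mul_nonneg (by linarith [ht.2]) (hFpos _ _))
  · have hm : Measurable fun t : ℝ => (t₀ + r - t) * F (t₀ + r - t) t := by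
      have h1 : Measurable fun t : ℝ => t₀ + r - t := measurable_const.sub measurable_id
      exact h1.mul (hFmeas.comp (h1.prodMk measurable_id))
    exact hm.aestronglyMeasurable

/-- The real mass over Ω equals the `toReal` of `Ge`. -/
lemma Greal_eq (hFmeas : Measurable (fun q : ℝ × ℝ => F q.1 q.2))
    (hFpos : ∀ r t, 0 ≤ F r t) (r₀ : ℝ) :
    (∫ q in Om t₀ r₀, F q.1 q.2) = (Ge t₀ F r₀).toReal := by
  rw [integral_eq_lintegral_of_nonneg_ae]
  · rfl
  · exact Eventually.of_forall fun q => hFpos q.1 q.2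
  · exact hFmeas.aestronglyMeasurable

end

end Stmt11Aux

open Stmt11Aux

/-- Lemma 3.3 ("lift of r"): averaging the characteristic-line flux. For a
nonnegative integrable `F` on `(0,∞) × ℝ` (playing the role of
`|w(r,t)|^{p+1}/r^p`, so that the flux integrand `|w|^{p+1}/r^{p-1}` equals
`r · F(r,t)`), the mean value theorem furnishes on every `[r₀, 2r₀]` a radius
where the flux is at most `2 ∫∫_{Ω(r₀)} F`, and consequently the lim inf of the
flux as `r → ∞` vanishes. -/
theorem stmt_11 (t₀ : ℝ) (F : ℝ → ℝ → ℝ)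
    (hFpos : ∀ r t, 0 ≤ F r t)
    (hFmeas : Measurable (fun q : ℝ × ℝ => F q.1 q.2))
    (hFint : IntegrableOn (fun q : ℝ × ℝ => F q.1 q.2) (Ioi 0 ×ˢ univ)) :
    (∀ r₀ : ℝ, 0 < r₀ → ∃ r ∈ Icc r₀ (2 * r₀),
      (∫ t in Ioc t₀ (t₀ + r), (t₀ + r - t) * F (t₀ + r - t) t) ≤
        2 * ∫ q in {q : ℝ × ℝ | 0 < q.1 ∧ t₀ < q.2 ∧
            t₀ + r₀ < q.1 + q.2 ∧ q.1 + q.2 < t₀ + 2 * r₀}, F q.1 q.2) ∧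
    Filter.liminf
      (fun r : ℝ => ∫ t in Ioc t₀ (t₀ + r), (t₀ + r - t) * F (t₀ + r - t) t)
      atTop = 0 := by
  set Q : ℝ → ℝ := fun r => ∫ t in Ioc t₀ (t₀ + r), (t₀ + r - t) * F (t₀ + r - t) t with hQ
  have hQnonneg : ∀ r, 0 ≤ Q r := fun r =>
    setIntegral_nonneg measurableSet_Ioc fun t ht =>
      mul_nonneg (by linarith [ht.2]) (hFpos _ _)
  -- part 1
  have part1 : ∀ r₀ : ℝ, 0 < r₀ → ∃ r ∈ Icc r₀ (2 * r₀),
      Q r ≤ 2 * ∫ q in Om t₀ r₀, F q.1 q.2 := by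
    intro r₀ hr₀
    obtain ⟨r, hrIcc, hrle⟩ := exists_r hFmeas hFpos hFint hr₀ (t₀ := t₀)
    refine ⟨r, hrIcc, ?_⟩
    have hGfin : Ge t₀ F r₀ ≠ ∞ := Ge_ne_top hFpos hFint r₀
    have hQr : Q r = (Qe t₀ F r).toReal := Qreal_eq hFmeas hFpos r
    rw [hQr, Greal_eq hFmeas hFpos]
    calc (Qe t₀ F r).toReal ≤ (2 * Ge t₀ F r₀).toReal :=
          ENNReal.toReal_mono (ENNReal.mul_ne_top (by norm_num) hGfin) hrle
      _ = 2 * (Ge t₀ F r₀).toReal := by rw [ENNReal.toReal_mul, ENNReal.toReal_ofNat]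
  refine ⟨part1, ?_⟩
  -- the flux is frequently small
  have hfreq : ∀ ε : ℝ, 0 < ε → ∃ᶠ r in atTop, Q r ≤ ε := by
    intro ε hε
    rw [frequently_atTop]
    intro M
    obtain ⟨N, hN⟩ := Ge_small hFmeas hFpos hFint (t₀ := t₀) (ε / 2) (by linarith)
    set r₀ : ℝ := max M (max N 1) with hr₀def
    have hr₀pos : 0 < r₀ := lt_of_lt_of_le one_pos ((le_max_right N 1).trans (le_max_right _ _))
    obtain ⟨r, hrIcc, hrle⟩ := exists_r hFmeas hFpos hFint hr₀pos (t₀ := t₀)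
    refine ⟨r, le_trans (le_max_left _ _) hrIcc.1, ?_⟩
    have hGsmall : Ge t₀ F r₀ ≤ ENNReal.ofReal (ε / 2) :=
      hN r₀ ((le_max_left N 1).trans (le_max_right _ _))
    have hGle : (Ge t₀ F r₀).toReal ≤ ε / 2 :=
      ENNReal.toReal_le_of_le_ofReal (by linarith) hGsmall
    have hGfin : Ge t₀ F r₀ ≠ ∞ := Ge_ne_top hFpos hFint r₀
    have hQr : Q r = (Qe t₀ F r).toReal := Qreal_eq hFmeas hFpos r
    rw [hQr]
    calc (Qe t₀ F r).toReal ≤ (2 * Ge t₀ F r₀).toReal :=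
          ENNReal.toReal_mono (ENNReal.mul_ne_top (by norm_num) hGfin) hrle
      _ = 2 * (Ge t₀ F r₀).toReal := by rw [ENNReal.toReal_mul, ENNReal.toReal_ofNat]
      _ ≤ ε := by linarith
  -- liminf computation
  have hb : IsBoundedUnder (· ≥ ·) atTop Q := isBoundedUnder_of ⟨0, fun r => hQnonneg r⟩
  have hcb : IsCoboundedUnder (· ≥ ·) atTop Q :=
    IsCoboundedUnder.of_frequently_le (hfreq 1 one_pos)
  have hge0 : 0 ≤ liminf Q atTop := le_liminf_of_le hcb (Eventually.of_forall hQnonneg)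
  have hle0 : liminf Q atTop ≤ 0 := by
    refine le_of_forall_pos_le_add fun ε hε => ?_
    rw [zero_add]
    exact liminf_le_of_frequently_le (hfreq ε hε) hb
  exact le_antisymm hle0 hge0
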